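/- Suppose 0 < β < α ≤ 2 and there exists C such that ∫ |Ef(x)|^q H(x) dx ≤ C 𝔸_β(H) ‖f‖_{L²(σ)}^q for all f ∈ L²(σ) and all measurable H : ℝ² → [0,1] with 0 < 𝔸_β(H) < ∞. Then for every q' > (α/β)q there exists C' such that ∫ |Ef(x)|^{q'} H(x) dx ≤ C' 𝔸_α(H) ‖f‖_{L²(σ)}^{q'} for all f ∈ L²(σ) and all measurable H with 0 < 𝔸_α(H) < ∞. In particular Q(α,2)/α ≤ Q(β,2)/β, where Q(γ,p) is the infimum of exponents q for which the corresponding weighted estimate holds with weights of dimension γ. -/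

import Mathlib

open MeasureTheory ENNReal Real

noncomputable section

abbrev Plane := ℝ × ℝ
/-- The set `𝔹(x,R₁,R₂) ⊆ ℝ² × ℝ²`. -/
def MTBox (x : Plane) (R₁ R₂ : ℝ) : Set (Plane × Plane) :=
  {p | |p.1.1 + p.2.1 - x.1| ≤ R₁ ∧ |p.1.2 + p.2.2 - x.2| ≤ R₂}

/-- `𝔸_γ(H)²`: the infimum of constants `C` with
`∫_{𝔹(x,R₁,R₂)} H(y)H(z) d(y,z) ≤ C (R₁R₂)^γ` for all `x` and `R₁,R₂ ≥ 1`. -/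
def Asq (γ : ℝ) (H : Plane → ℝ) : ℝ≥0∞ :=
  sInf {C : ℝ≥0∞ | ∀ (x : Plane) (R₁ R₂ : ℝ), 1 ≤ R₁ → 1 ≤ R₂ →
    ∫⁻ p in MTBox x R₁ R₂, ENNReal.ofReal (H p.1 * H p.2) ≤
      C * ENNReal.ofReal ((R₁ * R₂) ^ γ)}

/-- `𝔸_γ(H)`, the square root of `Asq γ H`. -/
def Adim (γ : ℝ) (H : Plane → ℝ) : ℝ≥0∞ := Asq γ H ^ ((1 : ℝ) / 2)
/-- The Fourier kernel `e^{-2πi x·ξ}` on `ℝ²`. -/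
def fourierKer (x ξ : Plane) : ℂ :=
  Complex.exp (((-2 * Real.pi * (x.1 * ξ.1 + x.2 * ξ.2) : ℝ) : ℂ) * Complex.I)

/-- The extension operator `Ef(x) = ∫ e^{-2πi x·ξ} f(ξ) dσ(ξ)`. -/
def extOp (σ : Measure Plane) (f : Plane → ℂ) (x : Plane) : ℂ :=
  ∫ ξ, fourierKer x ξ * f ξ ∂σ

/-- The Fourier transform `σ̂(x) = ∫ e^{-2πi x·ξ} dσ(ξ)` of the measure `σ`. -/
def ftMeasure (σ : Measure Plane) (x : Plane) : ℂ := ∫ ξ, fourierKer x ξ ∂σ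

/-- The `L²(σ)` norm of `f`. -/
def L2n (σ : Measure Plane) (f : Plane → ℂ) : ℝ := (∫ ξ, ‖f ξ‖ ^ 2 ∂σ) ^ ((1 : ℝ) / 2)

-- Lemma: Asq is itself a valid constant
lemma le_Asq_mul (γ : ℝ) (H : Plane → ℝ) (x : Plane) (R₁ R₂ : ℝ) (h1 : 1 ≤ R₁) (h2 : 1 ≤ R₂) :
    ∫⁻ p in MTBox x R₁ R₂, ENNReal.ofReal (H p.1 * H p.2) ≤
      Asq γ H * ENNReal.ofReal ((R₁ * R₂) ^ γ) := by
  have hrpos : (0:ℝ) < (R₁ * R₂) ^ γ :=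
    Real.rpow_pos_of_pos (by nlinarith) γ
  have he0 : ENNReal.ofReal ((R₁ * R₂) ^ γ) ≠ 0 := (ENNReal.ofReal_pos.mpr hrpos).ne'
  have heT : ENNReal.ofReal ((R₁ * R₂) ^ γ) ≠ ⊤ := ENNReal.ofReal_ne_top
  rw [← ENNReal.div_le_iff he0 heT]
  refine le_sInf fun b hb => ?_
  rw [ENNReal.div_le_iff he0 heT]
  exact hb x R₁ R₂ h1 h2

lemma norm_fourierKer (x ξ : Plane) : ‖fourierKer x ξ‖ = 1 := by
  rw [fourierKer, Complex.norm_exp]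
  simp [Complex.mul_re]

lemma continuous_fourierKer : Continuous fun p : Plane × Plane => fourierKer p.1 p.2 := by
  unfold fourierKer
  fun_prop

lemma continuous_extOp (σ : Measure Plane) [IsFiniteMeasure σ] {f : Plane → ℂ}
    (hf : MemLp f 2 σ) : Continuous (extOp σ f) := by
  have hfi : Integrable f σ := hf.integrable one_le_two
  apply continuous_of_dominated (bound := fun ξ => ‖f ξ‖)
  · intro x
    exact ((continuous_fourierKer.comp (Continuous.prodMk_right x)).aestronglyMeasurable).mul hf.1
  · intro x
    refine Filter.Eventually.of_forall fun ξ => ?_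
    rw [norm_mul, norm_fourierKer, one_mul]
  · exact hfi.norm
  · refine Filter.Eventually.of_forall fun ξ => ?_
    exact (continuous_fourierKer.comp (continuous_id.prodMk continuous_const)).mul continuous_const

lemma min_le_rpow_mul_rpow (a b : ℝ≥0∞) {θ : ℝ} (hθ0 : 0 < θ) (hθ1 : θ < 1) :
    min a b ≤ a ^ θ * b ^ (1 - θ) := by
  rcases eq_or_ne (min a b) 0 with h | h
  · exact h ▸ zero_le
  rcases eq_or_ne (min a b) ⊤ with h' | h'
  · have ha : a = ⊤ := by
      have := min_le_left a b; rw [h'] at this; exact top_le_iff.mp this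
    have hb : b = ⊤ := by
      have := min_le_right a b; rw [h'] at this; exact top_le_iff.mp this
    rw [ha, hb, ENNReal.top_rpow_of_pos hθ0, ENNReal.top_rpow_of_pos (by linarith)]
    simp
  · calc min a b = min a b ^ θ * min a b ^ (1 - θ) := by
          rw [← ENNReal.rpow_add θ (1-θ) h h']
          norm_num
      _ ≤ a ^ θ * b ^ (1 - θ) :=
          mul_le_mul' (ENNReal.rpow_le_rpow (min_le_left a b) hθ0.le)
            (ENNReal.rpow_le_rpow (min_le_right a b) (by linarith))

lemma measurableSet_MTBox (x : Plane) (R₁ R₂ : ℝ) : MeasurableSet (MTBox x R₁ R₂) := by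
  have h1 : Measurable fun p : Plane × Plane => |p.1.1 + p.2.1 - x.1| :=
    ((measurable_fst.fst.add measurable_snd.fst).sub measurable_const).abs
  have h2 : Measurable fun p : Plane × Plane => |p.1.2 + p.2.2 - x.2| :=
    ((measurable_fst.snd.add measurable_snd.snd).sub measurable_const).abs
  exact (measurableSet_le h1 measurable_const).inter (measurableSet_le h2 measurable_const)

/-- The squared integral is the supremum of box integrals. -/
lemma sq_lintegral_eq_iSup (G : Plane → ℝ) (hG : Measurable G) (hG0 : ∀ y, 0 ≤ G y) :
    (∫⁻ y, ENNReal.ofReal (G y)) * (∫⁻ y, ENNReal.ofReal (G y)) =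
      ⨆ n : ℕ, ∫⁻ p in MTBox 0 (n+1) (n+1), ENNReal.ofReal (G p.1 * G p.2) := by
  set ν := (volume : Measure (Plane × Plane)).withDensity
      (fun p => ENNReal.ofReal (G p.1) * ENNReal.ofReal (G p.2)) with hν
  have hmeas : Measurable fun p : Plane × Plane => ENNReal.ofReal (G p.1) * ENNReal.ofReal (G p.2) :=
    ((hG.comp measurable_fst).ennreal_ofReal).mul ((hG.comp measurable_snd).ennreal_ofReal)
  have hsets : ∀ n : ℕ, ν (MTBox 0 (n+1) (n+1)) =
      ∫⁻ p in MTBox 0 (n+1) (n+1), ENNReal.ofReal (G p.1 * G p.2) := by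
    intro n
    rw [hν, withDensity_apply _ (measurableSet_MTBox _ _ _)]
    refine lintegral_congr fun p => ?_
    rw [ENNReal.ofReal_mul (hG0 _)]
  have hmono : Monotone fun n : ℕ => MTBox (0 : Plane) (n+1) (n+1) := by
    intro n m hnm p hp
    obtain ⟨hp1, hp2⟩ := hp
    have : ((n:ℝ)+1) ≤ (m:ℝ)+1 := by exact_mod_cast by omega
    exact ⟨hp1.trans this, hp2.trans this⟩
  have hunion : (⋃ n : ℕ, MTBox (0 : Plane) (n+1) (n+1)) = Set.univ := by
    ext p
    simp only [Set.mem_iUnion, Set.mem_univ, iff_true]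
    obtain ⟨n, hn⟩ := exists_nat_ge (max |p.1.1 + p.2.1 - (0:Plane).1| |p.1.2 + p.2.2 - (0:Plane).2|)
    exact ⟨n, ⟨(le_max_left _ _).trans (hn.trans (by linarith)),
      (le_max_right _ _).trans (hn.trans (by linarith))⟩⟩
  have huniv : ν Set.univ = (∫⁻ y, ENNReal.ofReal (G y)) * (∫⁻ y, ENNReal.ofReal (G y)) := by
    rw [hν, withDensity_apply _ MeasurableSet.univ, Measure.restrict_univ]
    rw [MeasureTheory.Measure.volume_eq_prod, lintegral_prod_mul hG.ennreal_ofReal.aemeasurable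
      hG.ennreal_ofReal.aemeasurable]
  calc (∫⁻ y, ENNReal.ofReal (G y)) * (∫⁻ y, ENNReal.ofReal (G y)) = ν Set.univ := huniv.symm
    _ = ν (⋃ n : ℕ, MTBox (0 : Plane) (n+1) (n+1)) := by rw [hunion]
    _ = ⨆ n : ℕ, ν (MTBox (0 : Plane) (n+1) (n+1)) := (hmono.directed_le).measure_iUnion
    _ = _ := by simp_rw [hsets]

/-- Cauchy–Schwarz: pointwise bound on the extension operator. -/
lemma extOp_le (σ : Measure Plane) [IsFiniteMeasure σ] {f : Plane → ℂ}
    (hf : MemLp f 2 σ) (x : Plane) :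
    ‖extOp σ f x‖ ≤ (σ Set.univ).toReal ^ ((1:ℝ)/2) * L2n σ f := by
  have h2 : ENNReal.ofReal (2:ℝ) = 2 := by norm_num
  have hcs := integral_mul_le_Lp_mul_Lq_of_nonneg (μ := σ)
      (f := fun ξ => ‖f ξ‖) (g := fun _ => (1:ℝ))
      ((⟨by norm_num, by norm_num, by norm_num⟩ : Real.HolderConjugate 2 2))
      (Filter.Eventually.of_forall fun ξ => norm_nonneg _)
      (Filter.Eventually.of_forall fun _ => zero_le_one)
      (by rw [h2]; exact hf.norm) (by rw [h2]; exact memLp_const 1)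
  have e1 : ∫ ξ, ‖f ξ‖ ^ (2:ℝ) ∂σ = ∫ ξ, ‖f ξ‖ ^ (2:ℕ) ∂σ :=
    integral_congr_ae (Filter.Eventually.of_forall fun ξ => by
      show ‖f ξ‖ ^ (2:ℝ) = ‖f ξ‖ ^ (2:ℕ)
      rw [← Real.rpow_natCast ‖f ξ‖ 2]; norm_num)
  have e2 : ∫ ξ, (1:ℝ) ^ (2:ℝ) ∂σ = (σ Set.univ).toReal := by simp [Measure.real]
  calc ‖extOp σ f x‖ ≤ ∫ ξ, ‖fourierKer x ξ * f ξ‖ ∂σ := norm_integral_le_integral_norm _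
    _ = ∫ ξ, ‖f ξ‖ * 1 ∂σ := by
        refine integral_congr_ae (Filter.Eventually.of_forall fun ξ => ?_)
        show ‖fourierKer x ξ * f ξ‖ = ‖f ξ‖ * 1
        rw [norm_mul, norm_fourierKer, one_mul, mul_one]
    _ ≤ (∫ ξ, ‖f ξ‖ ^ (2:ℝ) ∂σ) ^ (1/(2:ℝ)) * (∫ ξ, (1:ℝ) ^ (2:ℝ) ∂σ) ^ (1/(2:ℝ)) := hcs
    _ = (σ Set.univ).toReal ^ ((1:ℝ)/2) * L2n σ f := by
        rw [e1, e2, mul_comm, L2n]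

lemma lintegral_pair_ofReal_mul (G : Plane → ℝ) (hG : Measurable G) (hG0 : ∀ y, 0 ≤ G y) :
    ∫⁻ p : Plane × Plane, ENNReal.ofReal (G p.1 * G p.2) =
      (∫⁻ y, ENNReal.ofReal (G y)) * (∫⁻ y, ENNReal.ofReal (G y)) := by
  calc ∫⁻ p : Plane × Plane, ENNReal.ofReal (G p.1 * G p.2)
      = ∫⁻ p : Plane × Plane, ENNReal.ofReal (G p.1) * ENNReal.ofReal (G p.2) :=
        lintegral_congr fun p => ENNReal.ofReal_mul (hG0 p.1)
    _ = _ := by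
        rw [MeasureTheory.Measure.volume_eq_prod]
        exact lintegral_prod_mul hG.ennreal_ofReal.aemeasurable hG.ennreal_ofReal.aemeasurable

/-- upgrading weighted extension estimates from fractal dimension `β`
to fractal dimension `α`: if `∫ |Ef|^q H ≤ C 𝔸_β(H) ‖f‖_{L²(σ)}^q` for all `f` and
weights `H` of dimension `β`, then for every `q' > (α/β)q` the corresponding estimate
holds with weights of dimension `α`. -/
theorem stmt5 (σ : Measure Plane) [IsFiniteMeasure σ]
    (α β q : ℝ) (hβ : 0 < β) (hβα : β < α) (hα2 : α ≤ 2) (hq : 0 < q)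
    (C : ℝ) (hC : 0 ≤ C)
    (hyp : ∀ f : Plane → ℂ, MemLp f 2 σ →
      ∀ H : Plane → ℝ, Measurable H → (∀ x, 0 ≤ H x ∧ H x ≤ 1) →
        0 < Adim β H → Adim β H < ⊤ →
        ∫⁻ x, ENNReal.ofReal (‖extOp σ f x‖ ^ q * H x) ≤
          ENNReal.ofReal (C * L2n σ f ^ q) * Adim β H) :
    ∀ q' : ℝ, (α / β) * q < q' → ∃ C' : ℝ, 0 ≤ C' ∧
      ∀ f : Plane → ℂ, MemLp f 2 σ →
        ∀ H : Plane → ℝ, Measurable H → (∀ x, 0 ≤ H x ∧ H x ≤ 1) →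
          0 < Adim α H → Adim α H < ⊤ →
          ∫⁻ x, ENNReal.ofReal (‖extOp σ f x‖ ^ q' * H x) ≤
            ENNReal.ofReal (C' * L2n σ f ^ q') * Adim α H := by
  intro q' hq'
  have hα : 0 < α := hβ.trans hβα
  have haq : 0 < α / β * q := by positivity
  have hq'pos : 0 < q' := haq.trans hq'
  have hs : 0 < q' - α / β * q := sub_pos.mpr hq'
  have hs' : q' - α / β * q ≠ 0 := hs.ne'
  refine ⟨q' * C ^ (α/β) * ((σ Set.univ).toReal ^ ((1:ℝ)/2)) ^ (q' - α / β * q)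
      / (q' - α / β * q), by positivity, ?_⟩
  intro f hf H hH hH01 hA0 hAT
  have hint : (0:ℝ) ≤ ∫ ξ, ‖f ξ‖ ^ 2 ∂σ := integral_nonneg fun ξ => by positivity
  have hN0 : 0 ≤ L2n σ f := Real.rpow_nonneg hint _
  have hw0 : (0:ℝ) ≤ (σ Set.univ).toReal ^ ((1:ℝ)/2) :=
    Real.rpow_nonneg ENNReal.toReal_nonneg _
  set N := L2n σ f with hN
  set w := (σ Set.univ).toReal ^ ((1:ℝ)/2) with hw
  set M := w * N with hM
  have hM0 : 0 ≤ M := mul_nonneg hw0 hN0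
  have hFc : Continuous fun x => ‖extOp σ f x‖ := (continuous_extOp σ hf).norm
  have hFm : Measurable fun x => ‖extOp σ f x‖ := hFc.measurable
  have hFM : ∀ x, ‖extOp σ f x‖ ≤ M := fun x => extOp_le σ hf x
  set θ : ℝ := β / α with hθdef
  have hθ0 : 0 < θ := by positivity
  have hθ1 : θ < 1 := (div_lt_one hα).mpr hβα
  have hθinv : θ * (α / β) = 1 := by rw [hθdef]; field_simp
  have hA0' : Asq α H ≠ 0 := by
    intro h
    rw [Adim, h, ENNReal.zero_rpow_of_pos (by norm_num)] at hA0
    exact lt_irrefl _ hA0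
  have hAT' : Asq α H ≠ ⊤ := by
    intro h
    rw [Adim, h, ENNReal.top_rpow_of_pos (by norm_num)] at hAT
    exact lt_irrefl _ hAT
  have hAdimT : Adim α H ≠ ⊤ := hAT.ne
  set μ : Measure Plane := volume.withDensity (fun x => ENNReal.ofReal (H x)) with hμ
  set D : ℝ≥0∞ := ENNReal.ofReal (C * N ^ q) with hD
  have hDT : D ≠ ⊤ := ENNReal.ofReal_ne_top
  -- μ is dominated by Lebesgue measure on measurable sets
  have hμle : ∀ s : Set Plane, MeasurableSet s → μ s ≤ volume s := by
    intro s hsm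
    rw [hμ, withDensity_apply _ hsm]
    calc ∫⁻ x in s, ENNReal.ofReal (H x) ≤ ∫⁻ x in s, 1 :=
          lintegral_mono fun x => ENNReal.ofReal_le_one.mpr (hH01 x).2
      _ = volume s := by rw [setLIntegral_one]
  -- Key distribution estimate
  have key : ∀ t : ℝ, 0 < t →
      μ {a | t < ‖extOp σ f a‖} ≤
        ENNReal.ofReal (t ^ (-(α / β * q))) * (D ^ (α/β) * Adim α H) := by
    intro t ht
    set E : ℕ → Set Plane := fun n =>
      {y : Plane | t < ‖extOp σ f y‖} ∩
        Set.Icc (-((n:ℝ)+1), -((n:ℝ)+1)) (((n:ℝ)+1), ((n:ℝ)+1)) with hE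
    have hEmeas : ∀ n, MeasurableSet (E n) := fun n =>
      (measurableSet_lt measurable_const hFm).inter measurableSet_Icc
    have hEfin : ∀ n, μ (E n) < ⊤ := by
      intro n
      refine lt_of_le_of_lt ((measure_mono Set.inter_subset_right).trans
        (hμle _ measurableSet_Icc)) ?_
      exact IsCompact.measure_lt_top isCompact_Icc
    have hn : ∀ n, μ (E n) ≤
        ENNReal.ofReal (t ^ (-(α / β * q))) * (D ^ (α/β) * Adim α H) := by
      intro n
      rcases eq_or_ne (μ (E n)) 0 with h0 | h0
      · rw [h0]; exact zero_le
      set G : Plane → ℝ := (E n).indicator H with hG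
      have hGmeas : Measurable G := hH.indicator (hEmeas n)
      have hG0 : ∀ y, 0 ≤ G y := fun y => Set.indicator_nonneg (fun z _ => (hH01 z).1) y
      have hG01 : ∀ y, 0 ≤ G y ∧ G y ≤ 1 := fun y =>
        ⟨hG0 y, Set.indicator_apply_le' (fun _ => (hH01 y).2) (fun _ => zero_le_one)⟩
      have hGH : ∀ y, G y ≤ H y := fun y =>
        Set.indicator_apply_le' (fun _ => le_refl _) (fun _ => (hH01 y).1)
      set I : ℝ≥0∞ := μ (E n) with hI
      have hIeq : ∫⁻ y, ENNReal.ofReal (G y) = I := by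
        rw [hI, hμ, withDensity_apply _ (hEmeas n), ← lintegral_indicator (hEmeas n) _]
        refine lintegral_congr fun y => ?_
        by_cases hy : y ∈ E n
        · rw [hG, Set.indicator_of_mem hy, Set.indicator_of_mem hy]
        · rw [hG, Set.indicator_of_notMem hy, Set.indicator_of_notMem hy, ENNReal.ofReal_zero]
      have hI0 : I ≠ 0 := h0
      have hIT : I ≠ ⊤ := (hEfin n).ne
      -- box bound for the truncated weight G
      have hbox : ∀ (x : Plane) (R₁ R₂ : ℝ), 1 ≤ R₁ → 1 ≤ R₂ →
          ∫⁻ p in MTBox x R₁ R₂, ENNReal.ofReal (G p.1 * G p.2) ≤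
            (Asq α H ^ θ * (I * I) ^ (1 - θ)) * ENNReal.ofReal ((R₁ * R₂) ^ β) := by
        intro x R₁ R₂ h1 h2
        have hr0 : (0:ℝ) < R₁ * R₂ := by nlinarith
        have hb1 : ∫⁻ p in MTBox x R₁ R₂, ENNReal.ofReal (G p.1 * G p.2) ≤
            Asq α H * ENNReal.ofReal ((R₁ * R₂) ^ α) := by
          refine le_trans (lintegral_mono fun p => ENNReal.ofReal_le_ofReal ?_)
            (le_Asq_mul α H x R₁ R₂ h1 h2)
          exact mul_le_mul (hGH _) (hGH _) (hG0 _) ((hH01 _).1)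
        have hb2 : ∫⁻ p in MTBox x R₁ R₂, ENNReal.ofReal (G p.1 * G p.2) ≤ I * I := by
          rw [← hIeq]
          refine le_trans (lintegral_mono' Measure.restrict_le_self le_rfl) ?_
          exact le_of_eq (lintegral_pair_ofReal_mul G hGmeas hG0)
        refine le_trans (le_min hb1 hb2) (le_trans
          (min_le_rpow_mul_rpow _ _ hθ0 hθ1) (le_of_eq ?_))
        rw [ENNReal.mul_rpow_of_nonneg _ _ hθ0.le]
        have heα : (ENNReal.ofReal ((R₁*R₂) ^ α)) ^ θ = ENNReal.ofReal ((R₁*R₂) ^ β) := by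
          rw [ENNReal.ofReal_rpow_of_pos (Real.rpow_pos_of_pos hr0 α)]
          congr 1
          rw [← Real.rpow_mul hr0.le]
          congr 1
          rw [hθdef]; field_simp
        rw [heα]; ring
      have hAsqG : Asq β G ≤ Asq α H ^ θ * (I * I) ^ (1 - θ) := sInf_le hbox
      have hAsqG0 : Asq β G ≠ 0 := by
        intro hz
        have hzero : ∀ n' : ℕ, ∫⁻ p in MTBox 0 ((n':ℝ)+1) ((n':ℝ)+1),
            ENNReal.ofReal (G p.1 * G p.2) = 0 := by
          intro n'
          have h := le_Asq_mul β G 0 ((n':ℝ)+1) ((n':ℝ)+1)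
            (by linarith [Nat.cast_nonneg (α := ℝ) n']) (by linarith [Nat.cast_nonneg (α := ℝ) n'])
          rw [hz, zero_mul] at h
          exact le_antisymm h zero_le
        have hsq := sq_lintegral_eq_iSup G hGmeas hG0
        rw [hIeq] at hsq
        simp only [hzero, iSup_const] at hsq
        rcases mul_eq_zero.mp hsq with h | h <;> exact hI0 h
      have hKT : Asq α H ^ θ * (I * I) ^ (1 - θ) ≠ ⊤ := by
        refine ENNReal.mul_ne_top ?_ ?_
        · exact ENNReal.rpow_ne_top_of_nonneg hθ0.le hAT'
        · exact ENNReal.rpow_ne_top_of_nonneg (by linarith) (ENNReal.mul_ne_top hIT hIT)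
      have hGdim0 : 0 < Adim β G := by
        rw [Adim, pos_iff_ne_zero]
        intro h
        rw [ENNReal.rpow_eq_zero_iff] at h
        rcases h with ⟨h, _⟩ | ⟨_, h⟩
        · exact hAsqG0 h
        · norm_num at h
      have hGdimT : Adim β G < ⊤ := by
        rw [Adim]
        exact lt_of_le_of_lt (ENNReal.rpow_le_rpow hAsqG (by norm_num))
          (ENNReal.rpow_lt_top_of_nonneg (by norm_num) hKT)
      have hweight : ∫⁻ x, ENNReal.ofReal (‖extOp σ f x‖ ^ q * G x) ≤ D * Adim β G :=
        hyp f hf G hGmeas hG01 hGdim0 hGdimT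
      have hlow : ENNReal.ofReal (t ^ q) * I ≤ ∫⁻ x, ENNReal.ofReal (‖extOp σ f x‖ ^ q * G x) := by
        rw [← hIeq, ← lintegral_const_mul _ hGmeas.ennreal_ofReal]
        refine lintegral_mono fun x => ?_
        rw [← ENNReal.ofReal_mul (Real.rpow_nonneg ht.le q)]
        refine ENNReal.ofReal_le_ofReal ?_
        by_cases hx : x ∈ E n
        · refine mul_le_mul_of_nonneg_right ?_ (hG0 x)
          exact Real.rpow_le_rpow ht.le (le_of_lt hx.1) hq.le
        · rw [hG, Set.indicator_of_notMem hx, mul_zero, mul_zero]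
      have hKhalf : (Asq α H ^ θ * (I * I) ^ (1 - θ)) ^ ((1:ℝ)/2) =
          Asq α H ^ (θ/2) * I ^ (1 - θ) := by
        rw [ENNReal.mul_rpow_of_nonneg _ _ (by norm_num : (0:ℝ) ≤ 1/2)]
        congr 1
        · rw [← ENNReal.rpow_mul]
          congr 1; ring
        · have hII : I * I = I ^ (2:ℝ) := by
            rw [show (2:ℝ) = (1:ℝ)+1 by norm_num, ENNReal.rpow_add 1 1 hI0 hIT, ENNReal.rpow_one]
          rw [hII, ← ENNReal.rpow_mul, ← ENNReal.rpow_mul]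
          congr 1; ring
      have hDb : Adim β G ≤ Asq α H ^ (θ/2) * I ^ (1-θ) := by
        rw [Adim, ← hKhalf]
        exact ENNReal.rpow_le_rpow hAsqG (by norm_num)
      have hchain : ENNReal.ofReal (t ^ q) * I ≤ D * Asq α H ^ (θ/2) * I ^ (1-θ) := by
        refine hlow.trans (hweight.trans ?_)
        calc D * Adim β G ≤ D * (Asq α H ^ (θ/2) * I ^ (1-θ)) := mul_le_mul_right hDb D
          _ = D * Asq α H ^ (θ/2) * I ^ (1-θ) := (mul_assoc _ _ _).symm
      have hc0 : I ^ (1-θ) ≠ 0 := by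
        intro h
        rw [ENNReal.rpow_eq_zero_iff] at h
        rcases h with ⟨h, _⟩ | ⟨h, _⟩
        · exact hI0 h
        · exact hIT h
      have hcT : I ^ (1-θ) ≠ ⊤ := ENNReal.rpow_ne_top_of_nonneg (by linarith) hIT
      have hstep3 : ENNReal.ofReal (t ^ q) * I ^ θ ≤ D * Asq α H ^ (θ/2) := by
        rw [← ENNReal.mul_le_mul_iff_left hc0 hcT]
        calc ENNReal.ofReal (t ^ q) * I ^ θ * I ^ (1-θ)
            = ENNReal.ofReal (t ^ q) * I := by
              rw [mul_assoc, ← ENNReal.rpow_add _ _ hI0 hIT,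
                show θ + (1-θ) = (1:ℝ) by ring, ENNReal.rpow_one]
          _ ≤ D * Asq α H ^ (θ/2) * I ^ (1-θ) := hchain
      have ht0 : ENNReal.ofReal (t ^ q) ≠ 0 :=
        (ENNReal.ofReal_pos.mpr (Real.rpow_pos_of_pos ht q)).ne'
      have htT : ENNReal.ofReal (t ^ q) ≠ ⊤ := ENNReal.ofReal_ne_top
      have hstep4 : I ^ θ ≤ (ENNReal.ofReal (t ^ q))⁻¹ * (D * Asq α H ^ (θ/2)) := by
        have h := mul_le_mul_right hstep3 (ENNReal.ofReal (t ^ q))⁻¹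
        rwa [← mul_assoc, ENNReal.inv_mul_cancel ht0 htT, one_mul] at h
      have hstep5 : I ≤ ((ENNReal.ofReal (t ^ q))⁻¹) ^ (α/β) * (D ^ (α/β) * Adim α H) := by
        have h := ENNReal.rpow_le_rpow hstep4 (le_of_lt (by positivity : (0:ℝ) < α/β))
        rw [← ENNReal.rpow_mul, hθinv, ENNReal.rpow_one] at h
        refine h.trans (le_of_eq ?_)
        have hexp : θ / 2 * (α / β) = 1 / 2 := by
          have h' : θ / 2 * (α / β) = θ * (α / β) / 2 := by ring
          rw [h', hθinv]
        rw [ENNReal.mul_rpow_of_nonneg _ _ (by positivity : (0:ℝ) ≤ α/β),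
            ENNReal.mul_rpow_of_nonneg _ _ (by positivity : (0:ℝ) ≤ α/β), Adim,
            ← ENNReal.rpow_mul, hexp]
      have hinv : ((ENNReal.ofReal (t ^ q))⁻¹) ^ (α/β) = ENNReal.ofReal (t ^ (-(α/β*q))) := by
        rw [← ENNReal.ofReal_inv_of_pos (Real.rpow_pos_of_pos ht q),
            ← Real.rpow_neg ht.le,
            ENNReal.ofReal_rpow_of_pos (Real.rpow_pos_of_pos ht _)]
        congr 1
        rw [← Real.rpow_mul ht.le]
        congr 1; ring
      rw [hinv] at hstep5
      exact hstep5
    have hmonoE : Monotone E := by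
      intro n m hnm
      refine Set.inter_subset_inter_right _ (Set.Icc_subset_Icc ?_ ?_)
      · have hc : ((n:ℝ)+1) ≤ (m:ℝ)+1 := by
          have := Nat.cast_le (α := ℝ) |>.mpr hnm; linarith
        exact ⟨by simpa using neg_le_neg hc, by simpa using neg_le_neg hc⟩
      · have hc : ((n:ℝ)+1) ≤ (m:ℝ)+1 := by
          have := Nat.cast_le (α := ℝ) |>.mpr hnm; linarith
        exact ⟨hc, hc⟩
    have hU : {a : Plane | t < ‖extOp σ f a‖} = ⋃ n : ℕ, E n := by
      ext y
      simp only [hE, Set.mem_iUnion, Set.mem_inter_iff, Set.mem_setOf_eq, Set.mem_Icc]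
      constructor
      · intro hy
        obtain ⟨n, hn'⟩ := exists_nat_ge (max |y.1| |y.2|)
        have h1 : |y.1| ≤ (n:ℝ)+1 := le_trans (le_trans (le_max_left _ _) hn') (by linarith)
        have h2 : |y.2| ≤ (n:ℝ)+1 := le_trans (le_trans (le_max_right _ _) hn') (by linarith)
        exact ⟨n, hy, ⟨(abs_le.mp h1).1, (abs_le.mp h2).1⟩, ⟨(abs_le.mp h1).2, (abs_le.mp h2).2⟩⟩
      · rintro ⟨n, hy, _⟩; exact hy
    rw [hU, (hmonoE.directed_le).measure_iUnion]
    exact iSup_le hn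
  -- rewrite the LHS as an integral with respect to μ
  have hFq'meas : Measurable fun x => ENNReal.ofReal (‖extOp σ f x‖ ^ q') :=
    ((hFc.rpow_const fun x => Or.inr hq'pos.le).measurable).ennreal_ofReal
  have hLHS : ∫⁻ x, ENNReal.ofReal (‖extOp σ f x‖ ^ q' * H x) =
      ∫⁻ x, ENNReal.ofReal (‖extOp σ f x‖ ^ q') ∂μ := by
    rw [hμ, lintegral_withDensity_eq_lintegral_mul _ hH.ennreal_ofReal hFq'meas]
    refine lintegral_congr fun x => ?_
    show ENNReal.ofReal (‖extOp σ f x‖ ^ q' * H x) =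
      ENNReal.ofReal (H x) * ENNReal.ofReal (‖extOp σ f x‖ ^ q')
    rw [← ENNReal.ofReal_mul (hH01 x).1, mul_comm]
  have hlayer := lintegral_rpow_eq_lintegral_meas_lt_mul μ
    (Filter.Eventually.of_forall (fun x => norm_nonneg (extOp σ f x)))
    hFm.aemeasurable hq'pos
  rw [hLHS, hlayer]
  rcases le_or_gt M 0 with hM' | hM'
  · -- degenerate case : extOp σ f vanishes identically
    have hzero : ∫⁻ t in Set.Ioi (0:ℝ),
        μ {a | t < ‖extOp σ f a‖} * ENNReal.ofReal (t ^ (q'-1)) = 0 := by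
      refine (setLIntegral_congr_fun measurableSet_Ioi
        (fun t ht => ?_)).trans lintegral_zero
      have hempty : {a : Plane | t < ‖extOp σ f a‖} = ∅ := by
        ext a
        simp only [Set.mem_setOf_eq, Set.mem_empty_iff_false, iff_false, not_lt]
        exact ((hFM a).trans hM').trans (le_of_lt ht)
      rw [hempty, measure_empty, zero_mul]
    rw [hzero, mul_zero]
    exact zero_le
  · -- main case
    set X : ℝ≥0∞ := D ^ (α/β) * Adim α H with hX
    have hXT : X ≠ ⊤ := ENNReal.mul_ne_top
      (ENNReal.rpow_ne_top_of_nonneg (by positivity) hDT) hAdimT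
    have hJ : ∫⁻ t in Set.Ioc (0:ℝ) M, ENNReal.ofReal (t ^ (q' - α/β*q - 1)) =
        ENNReal.ofReal (M ^ (q' - α/β*q) / (q' - α/β*q)) := by
      have hint2 : IntegrableOn (fun t : ℝ => t ^ (q' - α/β*q - 1)) (Set.Ioc (0:ℝ) M) volume :=
        (intervalIntegral.intervalIntegrable_rpow' (by linarith)).1
      rw [← MeasureTheory.ofReal_integral_eq_lintegral_ofReal hint2
        ((ae_restrict_mem measurableSet_Ioc).mono fun t ht => Real.rpow_nonneg ht.1.le _)]
      congr 1
      rw [← intervalIntegral.integral_of_le hM'.le, integral_rpow (Or.inl (by linarith))]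
      rw [sub_add_cancel, Real.zero_rpow hs', sub_zero]
    have hIoi : ∫⁻ t in Set.Ioi (0:ℝ),
        μ {a | t < ‖extOp σ f a‖} * ENNReal.ofReal (t ^ (q'-1)) ≤
        X * ENNReal.ofReal (M ^ (q' - α/β*q) / (q' - α/β*q)) := by
      rw [show Set.Ioi (0:ℝ) = Set.Ioc 0 M ∪ Set.Ioi M from (Set.Ioc_union_Ioi_eq_Ioi hM'.le).symm,
        lintegral_union measurableSet_Ioi (Set.Ioc_disjoint_Ioi le_rfl)]
      have hpart2 : ∫⁻ t in Set.Ioi M,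
          μ {a | t < ‖extOp σ f a‖} * ENNReal.ofReal (t ^ (q'-1)) = 0 := by
        refine (setLIntegral_congr_fun measurableSet_Ioi
          (fun t ht => ?_)).trans lintegral_zero
        have hempty : {a : Plane | t < ‖extOp σ f a‖} = ∅ := by
          ext a
          simp only [Set.mem_setOf_eq, Set.mem_empty_iff_false, iff_false, not_lt]
          exact (hFM a).trans (le_of_lt ht)
        rw [hempty, measure_empty, zero_mul]
      have hpart1 : ∫⁻ t in Set.Ioc (0:ℝ) M,
          μ {a | t < ‖extOp σ f a‖} * ENNReal.ofReal (t ^ (q'-1)) ≤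
          X * ENNReal.ofReal (M ^ (q' - α/β*q) / (q' - α/β*q)) := by
        calc ∫⁻ t in Set.Ioc (0:ℝ) M, μ {a | t < ‖extOp σ f a‖} * ENNReal.ofReal (t ^ (q'-1))
            ≤ ∫⁻ t in Set.Ioc (0:ℝ) M, X * ENNReal.ofReal (t ^ (q' - α/β*q - 1)) := by
              refine setLIntegral_mono' measurableSet_Ioc fun t ht => ?_
              calc μ {a | t < ‖extOp σ f a‖} * ENNReal.ofReal (t ^ (q'-1))
                  ≤ (ENNReal.ofReal (t ^ (-(α/β*q))) * X) * ENNReal.ofReal (t ^ (q'-1)) :=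
                    mul_le_mul_left (key t ht.1) _
                _ = X * ENNReal.ofReal (t ^ (q' - α/β*q - 1)) := by
                    rw [mul_comm (ENNReal.ofReal (t ^ (-(α/β*q)))) X, mul_assoc,
                      ← ENNReal.ofReal_mul (Real.rpow_nonneg ht.1.le _),
                      ← Real.rpow_add ht.1]
                    congr 2; ring
          _ = X * ∫⁻ t in Set.Ioc (0:ℝ) M, ENNReal.ofReal (t ^ (q' - α/β*q - 1)) :=
              lintegral_const_mul' _ _ hXT
          _ = X * ENNReal.ofReal (M ^ (q' - α/β*q) / (q' - α/β*q)) := by rw [hJ]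
      rw [hpart2, add_zero]
      exact hpart1
    refine le_trans (mul_le_mul_right hIoi _) (le_of_eq ?_)
    have hreal : q' * (C * N ^ q) ^ (α/β) * ((w*N) ^ (q' - α/β*q) / (q' - α/β*q)) =
        (q' * C ^ (α/β) * w ^ (q' - α/β*q) / (q' - α/β*q)) * N ^ q' := by
      rcases eq_or_lt_of_le hN0 with h0 | hNpos
      · rw [← h0]
        simp [Real.zero_rpow hq.ne', Real.zero_rpow hq'pos.ne',
          Real.zero_rpow hs', Real.zero_rpow (by positivity : (0:ℝ) < α/β).ne']
      · rw [Real.mul_rpow hC (Real.rpow_nonneg hN0 q), Real.mul_rpow hw0 hN0,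
          ← Real.rpow_mul hN0]
        have hNq' : N ^ (q * (α/β)) * N ^ (q' - α/β*q) = N ^ q' := by
          rw [← Real.rpow_add hNpos]
          congr 1; ring
        rw [← hNq']
        field_simp
    calc ENNReal.ofReal q' * (X * ENNReal.ofReal (M ^ (q' - α/β*q) / (q' - α/β*q)))
        = ENNReal.ofReal q' * D ^ (α/β) * ENNReal.ofReal (M ^ (q' - α/β*q) / (q' - α/β*q))
            * Adim α H := by rw [hX]; ring
      _ = ENNReal.ofReal (q' * (C * N ^ q) ^ (α/β) * ((w*N) ^ (q' - α/β*q) / (q' - α/β*q)))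
            * Adim α H := by
          rw [hD, ENNReal.ofReal_rpow_of_nonneg (by positivity) (by positivity),
            ← ENNReal.ofReal_mul (by positivity), hM,
            ← ENNReal.ofReal_mul (by positivity)]
      _ = ENNReal.ofReal ((q' * C ^ (α/β) * w ^ (q' - α/β*q) / (q' - α/β*q)) * N ^ q')
            * Adim α H := by rw [hreal]
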